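/- arXiv:1503.05519 — 2 statements merged into one kernel-verified Lean document; each statement's English description precedes it below -/
import Mathlib

section
/- Define operators P_j(K, θ_K) by P_1 = θ_K and the recursion P_{j+1} = θ_K∘P_j - j·((1+2K)/(6(1-K)))·P_j. Write P_j = Σ_{r=1}^j p_{jr}(K) θ_K^r with p_{jr} ∈ C(K). Then each p_{jr}(K) = f_{jr}(K)/(1-K)^{ρ(j,r)} where ρ(j,r) = min(j-r, ⌊j/2⌋) and f_{jr}(K) is a polynomial of degree at most ρ(j,r). -/
/-! Writing `u = 1 - K`, a direct computation gives
`(θ_K − j w)(f / u^m) = (K f' − (j/6) f) / u^m + (m − j/2) K f / u^(m+1)`,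
so `θ_K − j w` raises the order of the pole at `K = 1`, and the degree of the numerator, by at
most one, and does not raise it at all when `j = 2m`. Along the recursion
`p_{(j+1)r} = (θ_K − j w) p_{jr} + p_{j(r−1)}` the bound `min(j − r, ⌊j/2⌋)` grows by one except
exactly when `j = 2 min(j − r, ⌊j/2⌋)`, which is the case where the pole term cancels. -/

/-- The inclusion of polynomials into rational functions. -/
noncomputable def polyC : Polynomial ℂ → RatFunc ℂ := algebraMap (Polynomial ℂ) (RatFunc ℂ)

/-- The derivative of a rational function, via the quotient rule. -/
noncomputable def rfDeriv (f : RatFunc ℂ) : RatFunc ℂ :=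
  polyC f.num.derivative / polyC f.denom
    - polyC f.num * polyC f.denom.derivative / polyC f.denom ^ 2

/-- `θ_K = K d/dK` on rational functions of `K`. -/
noncomputable def thetaK (f : RatFunc ℂ) : RatFunc ℂ := RatFunc.X * rfDeriv f

/-- The rational function `(1 + 2K)/(6(1 - K))`. -/
noncomputable def wK : RatFunc ℂ := (1 + 2 * RatFunc.X) / (6 * (1 - RatFunc.X))

/-- The coefficients `p_{jr}(K)` of `P_j(K, θ_K) = ∑_{r=1}^j p_{jr}(K) θ_K^r`, determined by
the recursion `P_1 = θ_K`, `P_{j+1} = θ_K ∘ P_j − j((1+2K)/(6(1−K))) P_j`, i.e.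
`p_{(j+1)r} = θ_K(p_{jr}) − j((1+2K)/(6(1−K))) p_{jr} + p_{j(r−1)}`. -/
noncomputable def pcoef : ℕ → ℕ → RatFunc ℂ
  | 0, _ => 0
  | 1, r => if r = 1 then 1 else 0
  | (j+2), r =>
      thetaK (pcoef (j+1) r) - (((j+1 : ℕ) : RatFunc ℂ)) * wK * pcoef (j+1) r
        + pcoef (j+1) (r-1)

open Polynomial

lemma polyC_injective : Function.Injective polyC :=
  IsFractionRing.injective (Polynomial ℂ) (RatFunc ℂ)

lemma polyC_ne_zero {p : ℂ[X]} (hp : p ≠ 0) : polyC p ≠ 0 :=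
  (map_ne_zero_iff _ polyC_injective).2 hp

lemma one_sub_X_ne_zero : (1 - X : ℂ[X]) ≠ 0 := by
  intro h
  simpa [coeff_one] using congrArg (coeff · 1) h

lemma natDegree_one_sub_X_pow_le (k : ℕ) : ((1 - X : ℂ[X]) ^ k).natDegree ≤ k := by
  compute_degree

lemma natDegree_X_mul_derivative_le (f : ℂ[X]) :
    (X * derivative f).natDegree ≤ f.natDegree := by
  rcases Nat.eq_zero_or_pos f.natDegree with h | h
  · rw [eq_C_of_natDegree_eq_zero h]
    simp
  · have := natDegree_derivative_le f
    have := natDegree_mul_le (p := X) (q := derivative f)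
    rw [natDegree_X] at this
    omega

lemma one_sub_X_mul_derivative_pow (m : ℕ) :
    (1 - X) * derivative ((1 - X : ℂ[X]) ^ m) = -(m : ℂ[X]) * (1 - X) ^ m := by
  cases m with
  | zero => simp
  | succ k =>
    rw [derivative_pow, derivative_sub, derivative_one, derivative_X, Nat.add_sub_cancel,
      C_eq_natCast]
    ring

lemma rfDeriv_div (p q : ℂ[X]) (hq : q ≠ 0) :
    rfDeriv (polyC p / polyC q)
      = polyC (derivative p * q - p * derivative q) / polyC (q ^ 2) := by
  set f := polyC p / polyC q
  have hD : polyC f.denom ≠ 0 := polyC_ne_zero f.denom_ne_zero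
  have hcross : f.num * q = p * f.denom := by
    apply polyC_injective
    have h : polyC f.num / polyC f.denom = polyC p / polyC q := f.num_div_denom
    simpa [polyC] using (div_eq_div_iff hD (polyC_ne_zero hq)).1 h
  have key : (derivative f.num * f.denom - f.num * derivative f.denom) * q ^ 2
      = (derivative p * q - p * derivative q) * f.denom ^ 2 := by
    have hcross' := congrArg derivative hcross
    rw [derivative_mul, derivative_mul] at hcross'
    linear_combination (f.denom * q) * hcross'
      - (derivative f.denom * q + f.denom * derivative q) * hcross
  calc rfDeriv f
      = polyC (derivative f.num * f.denom - f.num * derivative f.denom)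
          / polyC (f.denom ^ 2) := by
        rw [rfDeriv]
        simp only [polyC, map_sub, map_mul, map_pow] at hD ⊢
        field_simp
    _ = _ := by
        rw [div_eq_div_iff (polyC_ne_zero (pow_ne_zero 2 f.denom_ne_zero))
          (polyC_ne_zero (pow_ne_zero 2 hq))]
        simp only [polyC, ← map_mul, key]

noncomputable def thetaSubW (j : ℕ) (p : RatFunc ℂ) : RatFunc ℂ :=
  thetaK p - (j : RatFunc ℂ) * wK * p

lemma thetaSubW_zero (j : ℕ) : thetaSubW j 0 = 0 := by
  simp [thetaSubW, thetaK, rfDeriv, polyC]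

lemma thetaSubW_div_one_sub_X_pow (j m : ℕ) (f : ℂ[X]) :
    thetaSubW j (polyC f / polyC ((1 - X) ^ m))
      = polyC (X * derivative f - C ((j : ℂ) / 6) * f) / polyC ((1 - X) ^ m)
        + polyC (C ((m : ℂ) - j / 2) * X * f) / polyC ((1 - X) ^ (m + 1)) := by
  have hU : (1 - RatFunc.X : RatFunc ℂ) ≠ 0 := by
    simpa [polyC] using polyC_ne_zero one_sub_X_ne_zero
  have hD : polyC (derivative ((1 - X) ^ m))
      = -(m : RatFunc ℂ) * (1 - RatFunc.X) ^ m / (1 - RatFunc.X) := by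
    rw [eq_div_iff hU, mul_comm]
    simpa [polyC] using congrArg polyC (one_sub_X_mul_derivative_pow m)
  rw [thetaSubW, thetaK, rfDeriv_div _ _ (pow_ne_zero _ one_sub_X_ne_zero), wK]
  simp only [polyC, map_sub, map_mul, map_pow, map_one, map_natCast, map_div₀, map_ofNat,
    RatFunc.algebraMap_X, RatFunc.algebraMap_C] at hD ⊢
  rw [hD]
  field_simp
  ring

def HasPoleBound (p : RatFunc ℂ) (m : ℕ) : Prop :=
  ∃ f : ℂ[X], f.natDegree ≤ m ∧ p = polyC f / polyC ((1 - X) ^ m)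

namespace HasPoleBound

variable {p q : RatFunc ℂ} {m n : ℕ}

lemma zero (m : ℕ) : HasPoleBound 0 m :=
  ⟨0, by simp, by simp [polyC]⟩

lemma one : HasPoleBound 1 0 :=
  ⟨1, by simp, by simp [polyC]⟩

lemma add (hp : HasPoleBound p m) (hq : HasPoleBound q m) : HasPoleBound (p + q) m := by
  obtain ⟨f, hf, rfl⟩ := hp
  obtain ⟨g, hg, rfl⟩ := hq
  refine ⟨f + g, natDegree_add_le_of_degree_le hf hg, ?_⟩
  simp only [polyC, map_add, add_div]

lemma mono (hp : HasPoleBound p m) (hmn : m ≤ n) : HasPoleBound p n := by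
  obtain ⟨f, hf, rfl⟩ := hp
  refine ⟨f * (1 - X) ^ (n - m), ?_, ?_⟩
  · have := natDegree_one_sub_X_pow_le (n - m)
    have := natDegree_mul_le (p := f) (q := (1 - X) ^ (n - m))
    omega
  · rw [← Nat.add_sub_cancel' hmn, pow_add, Nat.add_sub_cancel_left]
    simp only [polyC, map_mul]
    exact (mul_div_mul_right _ _ (polyC_ne_zero (pow_ne_zero _ one_sub_X_ne_zero))).symm

lemma thetaSubW (hp : HasPoleBound p m) (j : ℕ) (hmn : m ≤ n) (h : j = 2 * m ∨ m < n) :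
    HasPoleBound (thetaSubW j p) n := by
  obtain ⟨f, hf, rfl⟩ := hp
  rw [thetaSubW_div_one_sub_X_pow]
  refine add (mono ⟨_, ?_, rfl⟩ hmn) ?_
  · refine (natDegree_sub_le _ _).trans (max_le ((natDegree_X_mul_derivative_le f).trans hf) ?_)
    exact (natDegree_C_mul_le _ _).trans hf
  rcases h with rfl | hlt
  · simpa [polyC] using zero n
  · refine mono ⟨_, ?_, rfl⟩ hlt
    rw [mul_assoc]
    refine (natDegree_C_mul_le _ _).trans ?_
    have := natDegree_mul_le (p := X) (q := f)
    rw [natDegree_X] at this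
    omega

end HasPoleBound

lemma pcoef_succ_succ (j r : ℕ) :
    pcoef (j + 2) r = thetaSubW (j + 1) (pcoef (j + 1) r) + pcoef (j + 1) (r - 1) := by
  rw [pcoef, thetaSubW]

theorem pcoef_eq_zero_of_lt : ∀ {j r : ℕ}, j < r → pcoef j r = 0
  | 0, _, _ => by rw [pcoef]
  | 1, r, h => by rw [pcoef, if_neg (by omega)]
  | j + 2, r, h => by
    rw [pcoef_succ_succ, pcoef_eq_zero_of_lt (by omega : j + 1 < r),
      pcoef_eq_zero_of_lt (by omega : j + 1 < r - 1), thetaSubW_zero, add_zero]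

theorem pcoef_hasPoleBound : ∀ j r : ℕ, HasPoleBound (pcoef j r) (min (j - r) (j / 2))
  | 0, r => by simpa [pcoef] using HasPoleBound.zero 0
  | 1, r => by
    rw [pcoef]
    split_ifs
    · simpa using HasPoleBound.one
    · simpa using HasPoleBound.zero 0
  | j + 2, r => by
    rw [pcoef_succ_succ]
    refine HasPoleBound.add ?_ ((pcoef_hasPoleBound (j + 1) (r - 1)).mono (by omega))
    rcases lt_or_ge (j + 1) r with hr | hr
    · rw [pcoef_eq_zero_of_lt hr, thetaSubW_zero]
      exact HasPoleBound.zero _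
    · exact (pcoef_hasPoleBound (j + 1) r).thetaSubW (j + 1) (by omega) (by omega)

/-- Each `p_{jr}(K) = f_{jr}(K)/(1−K)^{ρ(j,r)}` with `ρ(j,r) = min(j−r, ⌊j/2⌋)` and
`f_{jr}` a polynomial of degree at most `ρ(j,r)`. -/
theorem pcoef_pole_order :
    ∀ j r : ℕ, 1 ≤ r → r ≤ j →
      ∃ f : Polynomial ℂ, f.natDegree ≤ min (j - r) (j / 2) ∧
        pcoef j r = polyC f / polyC ((1 - Polynomial.X) ^ min (j - r) (j / 2)) :=
  fun j r _ _ => pcoef_hasPoleBound j r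
end

section
/- The following identity of formal power series holds: ₃F₂(5/12, 3/4, 13/12; 5/4, 3/2; K) = ₃F₂(-1/6, 1/6, 1/2; 3/4, 1/4; K)·₃F₂(7/12, 11/12, 5/4; 7/4, 3/2; K). -/
/-- The rising factorial (Pochhammer symbol) `(x)_n = x(x+1)⋯(x+n-1)`. -/
noncomputable def poch (x : ℂ) (n : ℕ) : ℂ := ∏ i ∈ Finset.range n, (x + i)

/-- The generalized hypergeometric series `₃F₂(a₁,a₂,a₃; b₁,b₂; z)` as a formal power
series: `∑_{n≥0} (a₁)_n (a₂)_n (a₃)_n / ((b₁)_n (b₂)_n n!) zⁿ`. -/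
noncomputable def F32 (a1 a2 a3 b1 b2 : ℂ) : PowerSeries ℂ :=
  PowerSeries.mk fun n =>
    poch a1 n * poch a2 n * poch a3 n / (poch b1 n * poch b2 n * (n.factorial : ℂ))

/- ### Auxiliary definitions for the proof -/

noncomputable def XP (n k : ℂ) : ℂ :=
  12059966205 + (-37299364314)*k + 42327473824*k^2 + (-23350005280)*k^3 + 6673991680*k^4 + (-933451776)*k^5 + 48807936*k^6 + 33945800604*n + (-90396108160)*n*k + 85509030336*n*k^2 + (-37774928640)*n*k^3 + 8143477760*n*k^4 + (-772153344)*n*k^5 + 21233664*n*k^6 + 40177279536*n^2 + (-89873180736)*n^2*k + 68194560000*n^2*k^2 + (-22671649280)*n^2*k^3 + 3286609920*n^2*k^4 + (-159252480)*n^2*k^5 + 25899765760*n^3 + (-46905159680)*n^3*k + 26828323840*n^3*k^2 + (-5978234880)*n^3*k^3 + 437944320*n^3*k^4 + 9811536640*n^4 + (-13548352000)*n^4*k + 5204459520*n^4*k^2 + (-583925760)*n^4*k^3 + 2181651456*n^5 + (-2052734976)*n^5*k + 398131200*n^5*k^2 + 263245824*n^6 + (-127401984)*n^6*k + 13271040*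n^7

noncomputable def sg0 (n : ℂ) : ℂ :=
  (-18564000) + (-119064320)*n + (-294153728)*n^2 + (-363110400)*n^3 + (-238510080)*n^4 + (-79626240)*n^5 + (-10616832)*n^6

noncomputable def sg1 (n : ℂ) : ℂ :=
  1556329600 + 4798891008*n + 6182265344*n^2 + 4274196480*n^3 + 1678049280*n^4 + 355663872*n^5 + 31850496*n^6

noncomputable def sg2 (n : ℂ) : ℂ :=
  (-8213879520) + (-19186407936)*n + (-18786276864)*n^2 + (-9879736320)*n^3 + (-2945802240)*n^4 + (-472449024)*n^5 + (-31850496)*n^6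

noncomputable def sg3 (n : ℂ) : ℂ :=
  8406478080 + 16825459968*n + 13944918528*n^2 + 6127902720*n^3 + 1506263040*n^4 + 196411392*n^5 + 10616832*n^6

noncomputable def tpP (x : ℂ) : ℂ := (x+7/12)*(x+11/12)*(x+5/4)
noncomputable def btP (x : ℂ) : ℂ := (x+7/4)*(x+3/2)*(x+1)
noncomputable def bnP (x : ℂ) : ℂ := (x-1/6)*(x+1/6)*(x+1/2)
noncomputable def bdP (x : ℂ) : ℂ := (x+3/4)*(x+1/4)*(x+1)

noncomputable def Aco (n : ℕ) : ℂ :=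
  poch (5/12) n * poch (3/4) n * poch (13/12) n / (poch (5/4) n * poch (3/2) n * (n.factorial : ℂ))
noncomputable def Bco (n : ℕ) : ℂ :=
  poch (-1/6) n * poch (1/6) n * poch (1/2) n / (poch (3/4) n * poch (1/4) n * (n.factorial : ℂ))
noncomputable def Cco (n : ℕ) : ℂ :=
  poch (7/12) n * poch (11/12) n * poch (5/4) n / (poch (7/4) n * poch (3/2) n * (n.factorial : ℂ))

noncomputable def Cz (m : ℤ) : ℂ := if 0 ≤ m then Cco m.toNat else 0

noncomputable def FF (N k : ℕ) : ℂ := Bco k * Cz ((N:ℤ) - (k:ℤ))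

noncomputable def GG (n k : ℕ) : ℂ :=
  bdP ((k:ℂ)-1) * XP (n:ℂ) (k:ℂ) * Bco k * Cz ((n:ℤ) - (k:ℤ) + 3)
    / (tpP ((n:ℂ)-(k:ℂ)+1) * tpP ((n:ℂ)-(k:ℂ)+2))

noncomputable def dd (n : ℕ) : ℂ := ∑ k ∈ Finset.range (n+1), FF n k

/- ### Basic lemmas -/

lemma poch_zero (x : ℂ) : poch x 0 = 1 := by simp [poch]

lemma poch_succ (x : ℂ) (n : ℕ) : poch x (n+1) = poch x n * (x + n) :=
  Finset.prod_range_succ _ _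

lemma poch_ne_zero {x : ℂ} (h : ∀ i : ℕ, x + i ≠ 0) (n : ℕ) : poch x n ≠ 0 :=
  Finset.prod_ne_zero_iff.mpr fun i _ => h i

lemma param_pos_ne (a b : ℕ) (ha : a ≠ 0) (hb : b ≠ 0) (i : ℕ) :
    (a:ℂ)/(b:ℂ) + (i:ℕ) ≠ 0 := by
  have hbC : (b:ℂ) ≠ 0 := Nat.cast_ne_zero.mpr hb
  intro h
  have h2 : ((a + b*i : ℕ) : ℂ) = ((0:ℕ) : ℂ) := by
    push_cast
    field_simp at h
    linear_combination h
  have h3 : a + b*i = 0 := Nat.cast_injective h2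
  omega

lemma neg_sixth_ne (i : ℕ) : (-1/6 : ℂ) + (i:ℕ) ≠ 0 := by
  intro h
  have h2 : ((6*i : ℕ) : ℂ) = ((1:ℕ) : ℂ) := by push_cast; linear_combination 6*h
  have h3 : 6*i = 1 := Nat.cast_injective h2
  omega

lemma fact_ne (n : ℕ) : ((n.factorial : ℕ) : ℂ) ≠ 0 :=
  Nat.cast_ne_zero.mpr (Nat.factorial_ne_zero n)

lemma q34 : (3/4 : ℂ) = (3:ℕ)/(4:ℕ) := by norm_num
lemma q14 : (1/4 : ℂ) = (1:ℕ)/(4:ℕ) := by norm_num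
lemma q74 : (7/4 : ℂ) = (7:ℕ)/(4:ℕ) := by norm_num
lemma q32 : (3/2 : ℂ) = (3:ℕ)/(2:ℕ) := by norm_num
lemma q54 : (5/4 : ℂ) = (5:ℕ)/(4:ℕ) := by norm_num

lemma poch34_ne (n : ℕ) : poch (3/4) n ≠ 0 := by
  rw [q34]; exact poch_ne_zero (param_pos_ne 3 4 (by norm_num) (by norm_num)) n
lemma poch14_ne (n : ℕ) : poch (1/4) n ≠ 0 := by
  rw [q14]; exact poch_ne_zero (param_pos_ne 1 4 (by norm_num) (by norm_num)) n
lemma poch74_ne (n : ℕ) : poch (7/4) n ≠ 0 := by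
  rw [q74]; exact poch_ne_zero (param_pos_ne 7 4 (by norm_num) (by norm_num)) n
lemma poch32_ne (n : ℕ) : poch (3/2) n ≠ 0 := by
  rw [q32]; exact poch_ne_zero (param_pos_ne 3 2 (by norm_num) (by norm_num)) n
lemma poch54_ne (n : ℕ) : poch (5/4) n ≠ 0 := by
  rw [q54]; exact poch_ne_zero (param_pos_ne 5 4 (by norm_num) (by norm_num)) n

/- ### Contiguity (term-ratio) relations -/

lemma hB (k : ℕ) : Bco (k+1) * bdP (k:ℂ) = Bco k * bnP (k:ℂ) := by
  unfold Bco bdP bnP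
  rw [poch_succ, poch_succ, poch_succ, poch_succ, poch_succ, Nat.factorial_succ]
  have d1 : poch (3/4) k * ((3:ℂ)/4 + (k:ℂ)) ≠ 0 := by
    have := poch34_ne (k+1); rwa [poch_succ] at this
  have d2 : poch (1/4) k * ((1:ℂ)/4 + (k:ℂ)) ≠ 0 := by
    have := poch14_ne (k+1); rwa [poch_succ] at this
  have d3 : (((k+1) * k.factorial : ℕ) : ℂ) ≠ 0 :=
    Nat.cast_ne_zero.mpr (by positivity)
  rw [div_mul_eq_mul_div, div_mul_eq_mul_div,
    div_eq_div_iff (mul_ne_zero (mul_ne_zero d1 d2) d3)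
      (mul_ne_zero (mul_ne_zero (poch34_ne k) (poch14_ne k)) (fact_ne k))]
  push_cast
  ring

lemma hCnat (k : ℕ) : Cco (k+1) * btP (k:ℂ) = Cco k * tpP (k:ℂ) := by
  unfold Cco btP tpP
  rw [poch_succ, poch_succ, poch_succ, poch_succ, poch_succ, Nat.factorial_succ]
  have d1 : poch (7/4) k * ((7:ℂ)/4 + (k:ℂ)) ≠ 0 := by
    have := poch74_ne (k+1); rwa [poch_succ] at this
  have d2 : poch (3/2) k * ((3:ℂ)/2 + (k:ℂ)) ≠ 0 := by
    have := poch32_ne (k+1); rwa [poch_succ] at this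
  have d3 : (((k+1) * k.factorial : ℕ) : ℂ) ≠ 0 :=
    Nat.cast_ne_zero.mpr (by positivity)
  rw [div_mul_eq_mul_div, div_mul_eq_mul_div,
    div_eq_div_iff (mul_ne_zero (mul_ne_zero d1 d2) d3)
      (mul_ne_zero (mul_ne_zero (poch74_ne k) (poch32_ne k)) (fact_ne k))]
  push_cast
  ring

lemma hA (n : ℕ) : Aco (n+1) * (((n:ℂ)+5/4)*((n:ℂ)+3/2)*((n:ℂ)+1))
    = Aco n * (((n:ℂ)+5/12)*((n:ℂ)+3/4)*((n:ℂ)+13/12)) := by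
  unfold Aco
  rw [poch_succ, poch_succ, poch_succ, poch_succ, poch_succ, Nat.factorial_succ]
  have d1 : poch (5/4) n * ((5:ℂ)/4 + (n:ℂ)) ≠ 0 := by
    have := poch54_ne (n+1); rwa [poch_succ] at this
  have d2 : poch (3/2) n * ((3:ℂ)/2 + (n:ℂ)) ≠ 0 := by
    have := poch32_ne (n+1); rwa [poch_succ] at this
  have d3 : (((n+1) * n.factorial : ℕ) : ℂ) ≠ 0 :=
    Nat.cast_ne_zero.mpr (by positivity)
  rw [div_mul_eq_mul_div, div_mul_eq_mul_div,
    div_eq_div_iff (mul_ne_zero (mul_ne_zero d1 d2) d3)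
      (mul_ne_zero (mul_ne_zero (poch54_ne n) (poch32_ne n)) (fact_ne n))]
  push_cast
  ring

lemma CzNat (j : ℕ) : Cz (j:ℤ) = Cco j := by simp [Cz]

lemma hC (m : ℤ) : Cz (m+1) * btP (m:ℂ) = Cz m * tpP (m:ℂ) := by
  rcases le_or_gt 0 m with hm | hm
  · obtain ⟨j, rfl⟩ : ∃ j : ℕ, m = (j:ℤ) := ⟨m.toNat, (Int.toNat_of_nonneg hm).symm⟩
    have e1 : ((j:ℤ)+1) = ((j+1 : ℕ) : ℤ) := by push_cast; ring
    rw [e1, CzNat, CzNat]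
    have e2 : (((j:ℤ)):ℂ) = (j:ℂ) := by push_cast; ring
    rw [e2]
    exact hCnat j
  · rcases eq_or_lt_of_le (by omega : m ≤ -1) with he | hlt
    · subst he
      have e0 : Cz (-1) = 0 := by simp [Cz]
      have e1 : ((-1 : ℤ) + 1) = (0:ℤ) := by ring
      rw [e1, e0]
      have : btP (((-1:ℤ)):ℂ) = 0 := by
        push_cast [btP]; ring
      rw [this]
      ring
    · have e0 : Cz m = 0 := by simp only [Cz, if_neg (by omega : ¬ (0:ℤ) ≤ m)]
      have e1 : Cz (m+1) = 0 := by simp only [Cz, if_neg (by omega : ¬ (0:ℤ) ≤ m+1)]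
      rw [e0, e1]
      ring

/- ### Nonvanishing of the `tpP` factors at integer points -/

lemma tp_ne (m : ℤ) : tpP (m:ℂ) ≠ 0 := by
  unfold tpP
  apply mul_ne_zero
  apply mul_ne_zero
  · intro h
    have h2 : ((12*m + 7 : ℤ) : ℂ) = ((0:ℤ):ℂ) := by push_cast; linear_combination 12*h
    have := Int.cast_injective h2; omega
  · intro h
    have h2 : ((12*m + 11 : ℤ) : ℂ) = ((0:ℤ):ℂ) := by push_cast; linear_combination 12*h
    have := Int.cast_injective h2; omega
  · intro h
    have h2 : ((4*m + 5 : ℤ) : ℂ) = ((0:ℤ):ℂ) := by push_cast; linear_combination 4*h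
    have := Int.cast_injective h2; omega

/- ### The key certificate step (abstract version) -/

lemma step' (B0 B1 C0 C1 C2 C3 nc kc : ℂ)
    (h0 : C1 * btP (nc-kc) = C0 * tpP (nc-kc))
    (h1 : C2 * btP (nc-kc+1) = C1 * tpP (nc-kc+1))
    (h2 : C3 * btP (nc-kc+2) = C2 * tpP (nc-kc+2))
    (hBr : B1 * bdP kc = B0 * bnP kc)
    (t0 : tpP (nc-kc) ≠ 0) (t1 : tpP (nc-kc+1) ≠ 0) (t2 : tpP (nc-kc+2) ≠ 0)
    (d0 : bdP kc ≠ 0) :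
    sg0 nc * (B0*C0) + sg1 nc * (B0*C1) + sg2 nc * (B0*C2) + sg3 nc * (B0*C3)
      = bdP kc * XP nc (kc+1) * B1 * C2 / (tpP (nc-kc) * tpP (nc-kc+1))
        - bdP (kc-1) * XP nc kc * B0 * C3 / (tpP (nc-kc+1) * tpP (nc-kc+2)) := by
  have cert : bnP kc * btP (nc-kc+2) * XP nc (kc+1) - bdP (kc-1) * tpP (nc-kc) * XP nc kc
      = sg0 nc * (btP (nc-kc) * btP (nc-kc+1) * btP (nc-kc+2))
        + sg1 nc * (tpP (nc-kc) * btP (nc-kc+1) * btP (nc-kc+2))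
        + sg2 nc * (tpP (nc-kc) * tpP (nc-kc+1) * btP (nc-kc+2))
        + sg3 nc * (tpP (nc-kc) * tpP (nc-kc+1) * tpP (nc-kc+2)) := by
    unfold tpP btP bnP bdP sg0 sg1 sg2 sg3 XP
    ring
  have hD1 : tpP (nc-kc) * tpP (nc-kc+1) ≠ 0 := mul_ne_zero t0 t1
  have hD2 : tpP (nc-kc+1) * tpP (nc-kc+2) ≠ 0 := mul_ne_zero t1 t2
  rw [div_sub_div _ _ hD1 hD2, eq_div_iff (mul_ne_zero hD1 hD2)]
  linear_combination
    (-(B0 * C3 * tpP (nc-kc+1))) * cert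
    + (-(XP nc (kc+1)) * tpP (nc-kc+1) * tpP (nc-kc+2) * C2) * hBr
    + (-B0 * sg0 nc * tpP (nc-kc+1)^2 * tpP (nc-kc+2)) * h0
    + (-B0 * sg0 nc * tpP (nc-kc+1) * btP (nc-kc) * tpP (nc-kc+2)
        - B0 * sg1 nc * tpP (nc-kc) * tpP (nc-kc+1) * tpP (nc-kc+2)) * h1
    + (-B0 * sg0 nc * tpP (nc-kc+1) * btP (nc-kc) * btP (nc-kc+1)
        - B0 * sg1 nc * tpP (nc-kc) * tpP (nc-kc+1) * btP (nc-kc+1)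
        - B0 * sg2 nc * tpP (nc-kc) * tpP (nc-kc+1)^2
        + XP nc (kc+1) * tpP (nc-kc+1) * B0 * bnP kc) * h2

/- ### Specialization to the sequences -/

lemma step (n k : ℕ) :
    sg0 (n:ℂ) * FF n k + sg1 (n:ℂ) * FF (n+1) k + sg2 (n:ℂ) * FF (n+2) k
      + sg3 (n:ℂ) * FF (n+3) k = GG n (k+1) - GG n k := by
  have c0 : (((n:ℤ) - (k:ℤ) : ℤ) : ℂ) = (n:ℂ) - (k:ℂ) := by push_cast; ring
  have c1 : (((n:ℤ) - (k:ℤ) + 1 : ℤ) : ℂ) = (n:ℂ) - (k:ℂ) + 1 := by push_cast; ring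
  have c2 : (((n:ℤ) - (k:ℤ) + 2 : ℤ) : ℂ) = (n:ℂ) - (k:ℂ) + 2 := by push_cast; ring
  have h0 := hC ((n:ℤ) - (k:ℤ)); rw [c0] at h0
  have h1 := hC ((n:ℤ) - (k:ℤ) + 1)
  rw [c1, show (n:ℤ) - (k:ℤ) + 1 + 1 = (n:ℤ) - (k:ℤ) + 2 by ring] at h1
  have h2 := hC ((n:ℤ) - (k:ℤ) + 2)
  rw [c2, show (n:ℤ) - (k:ℤ) + 2 + 1 = (n:ℤ) - (k:ℤ) + 3 by ring] at h2
  have t0 := tp_ne ((n:ℤ) - (k:ℤ)); rw [c0] at t0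
  have t1 := tp_ne ((n:ℤ) - (k:ℤ) + 1); rw [c1] at t1
  have t2 := tp_ne ((n:ℤ) - (k:ℤ) + 2); rw [c2] at t2
  have d0 : bdP (k:ℂ) ≠ 0 := by
    unfold bdP
    refine mul_ne_zero (mul_ne_zero ?_ ?_) ?_
    · intro h
      have h2 : ((4*k + 3 : ℕ) : ℂ) = ((0:ℕ):ℂ) := by push_cast; linear_combination 4*h
      have := Nat.cast_injective h2; omega
    · intro h
      have h2 : ((4*k + 1 : ℕ) : ℂ) = ((0:ℕ):ℂ) := by push_cast; linear_combination 4*h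
      have := Nat.cast_injective h2; omega
    · intro h
      have h2 : ((k + 1 : ℕ) : ℂ) = ((0:ℕ):ℂ) := by push_cast; linear_combination h
      have := Nat.cast_injective h2; omega
  have key := step' (Bco k) (Bco (k+1)) (Cz ((n:ℤ) - (k:ℤ))) (Cz ((n:ℤ) - (k:ℤ) + 1))
      (Cz ((n:ℤ) - (k:ℤ) + 2)) (Cz ((n:ℤ) - (k:ℤ) + 3)) (n:ℂ) (k:ℂ)
      h0 h1 h2 (hB k) t0 t1 t2 d0
  have eFF0 : FF n k = Bco k * Cz ((n:ℤ) - (k:ℤ)) := rfl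
  have eFF1 : FF (n+1) k = Bco k * Cz ((n:ℤ) - (k:ℤ) + 1) := by
    unfold FF; congr 1; congr 1; push_cast; ring
  have eFF2 : FF (n+2) k = Bco k * Cz ((n:ℤ) - (k:ℤ) + 2) := by
    unfold FF; congr 1; congr 1; push_cast; ring
  have eFF3 : FF (n+3) k = Bco k * Cz ((n:ℤ) - (k:ℤ) + 3) := by
    unfold FF; congr 1; congr 1; push_cast; ring
  have eG1 : GG n (k+1) = bdP (k:ℂ) * XP (n:ℂ) ((k:ℂ)+1) * Bco (k+1)
      * Cz ((n:ℤ) - (k:ℤ) + 2) / (tpP ((n:ℂ)-(k:ℂ)) * tpP ((n:ℂ)-(k:ℂ)+1)) := by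
    unfold GG
    have a1 : ((n:ℤ) - ((k+1:ℕ):ℤ) + 3) = ((n:ℤ) - (k:ℤ) + 2) := by push_cast; ring
    rw [a1]
    have a2 : (((k+1:ℕ)):ℂ) = (k:ℂ) + 1 := by push_cast; ring
    rw [a2]
    have a3 : ((k:ℂ) + 1 - 1) = (k:ℂ) := by ring
    rw [a3]
    have a4 : ((n:ℂ) - ((k:ℂ)+1) + 1) = ((n:ℂ) - (k:ℂ)) := by ring
    have a5 : ((n:ℂ) - ((k:ℂ)+1) + 2) = ((n:ℂ) - (k:ℂ) + 1) := by ring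
    rw [a4, a5]
  have eG0 : GG n k = bdP ((k:ℂ)-1) * XP (n:ℂ) (k:ℂ) * Bco k
      * Cz ((n:ℤ) - (k:ℤ) + 3) / (tpP ((n:ℂ)-(k:ℂ)+1) * tpP ((n:ℂ)-(k:ℂ)+2)) := rfl
  rw [eFF0, eFF1, eFF2, eFF3, eG1, eG0]
  linear_combination key

/- ### Telescoping -/

lemma GG_zero_left (n : ℕ) : GG n 0 = 0 := by
  unfold GG bdP
  norm_num

lemma GG_zero_right (n : ℕ) : GG n (n+4) = 0 := by
  unfold GG
  have a1 : ((n:ℤ) - ((n+4:ℕ):ℤ) + 3) = (-1 : ℤ) := by push_cast; ring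
  rw [a1]
  have : Cz (-1) = 0 := by simp [Cz]
  rw [this]
  ring

lemma sum_FF (N m : ℕ) (h : N < m) : ∑ k ∈ Finset.range m, FF N k = dd N := by
  unfold dd
  symm
  apply Finset.sum_subset (Finset.range_subset_range.mpr (by omega))
  intro k _ hk
  have hkN : N < k := by
    simp only [Finset.mem_range] at hk
    omega
  unfold FF
  have : Cz ((N:ℤ) - (k:ℤ)) = 0 := by
    simp only [Cz, if_neg (by omega : ¬ (0:ℤ) ≤ (N:ℤ) - (k:ℤ))]
  rw [this]; ring

lemma dd_rec (n : ℕ) :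
    sg0 (n:ℂ) * dd n + sg1 (n:ℂ) * dd (n+1) + sg2 (n:ℂ) * dd (n+2)
      + sg3 (n:ℂ) * dd (n+3) = 0 := by
  have htel : ∑ k ∈ Finset.range (n+4),
      (sg0 (n:ℂ) * FF n k + sg1 (n:ℂ) * FF (n+1) k + sg2 (n:ℂ) * FF (n+2) k
        + sg3 (n:ℂ) * FF (n+3) k) = GG n (n+4) - GG n 0 := by
    rw [← Finset.sum_range_sub (GG n)]
    exact Finset.sum_congr rfl fun k _ => step n k
  rw [GG_zero_left, GG_zero_right, sub_zero] at htel
  have hsplit : ∑ k ∈ Finset.range (n+4),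
      (sg0 (n:ℂ) * FF n k + sg1 (n:ℂ) * FF (n+1) k + sg2 (n:ℂ) * FF (n+2) k
        + sg3 (n:ℂ) * FF (n+3) k)
      = sg0 (n:ℂ) * (∑ k ∈ Finset.range (n+4), FF n k)
        + sg1 (n:ℂ) * (∑ k ∈ Finset.range (n+4), FF (n+1) k)
        + sg2 (n:ℂ) * (∑ k ∈ Finset.range (n+4), FF (n+2) k)
        + sg3 (n:ℂ) * (∑ k ∈ Finset.range (n+4), FF (n+3) k) := by
    simp [Finset.sum_add_distrib, Finset.mul_sum]
  rw [hsplit] at htel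
  rw [sum_FF n (n+4) (by omega), sum_FF (n+1) (n+4) (by omega),
      sum_FF (n+2) (n+4) (by omega), sum_FF (n+3) (n+4) (by omega)] at htel
  exact htel

/- ### The LHS coefficients satisfy the same recurrence -/

lemma add_frac_ne (n a b : ℕ) (ha : a ≠ 0) (hb : b ≠ 0) : (n:ℂ) + (a:ℂ)/(b:ℂ) ≠ 0 := by
  intro h
  apply param_pos_ne a b ha hb n
  linear_combination h

lemma aco_rec (n : ℕ) :
    sg0 (n:ℂ) * Aco n + sg1 (n:ℂ) * Aco (n+1) + sg2 (n:ℂ) * Aco (n+2)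
      + sg3 (n:ℂ) * Aco (n+3) = 0 := by
  have r0 := hA n
  have r1 := hA (n+1)
  have r2 := hA (n+2)
  rw [show n+1+1 = n+2 by omega] at r1
  rw [show n+2+1 = n+3 by omega] at r2
  push_cast at r0 r1 r2
  set x : ℂ := (n:ℂ) with hx
  have f1 : (x+5/4) ≠ 0 := by
    intro h; exact add_frac_ne n 5 4 (by norm_num) (by norm_num) (by push_cast; linear_combination h)
  have f2 : (x+3/2) ≠ 0 := by
    intro h; exact add_frac_ne n 3 2 (by norm_num) (by norm_num) (by push_cast; linear_combination h)
  have f3 : (x+1) ≠ 0 := by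
    intro h; exact add_frac_ne n 1 1 (by norm_num) (by norm_num) (by push_cast; linear_combination h)
  have f4 : (x+1+5/4) ≠ 0 := by
    intro h; exact add_frac_ne (n+1) 5 4 (by norm_num) (by norm_num) (by push_cast; linear_combination h)
  have f5 : (x+1+3/2) ≠ 0 := by
    intro h; exact add_frac_ne (n+1) 3 2 (by norm_num) (by norm_num) (by push_cast; linear_combination h)
  have f6 : (x+1+1) ≠ 0 := by
    intro h; exact add_frac_ne (n+1) 1 1 (by norm_num) (by norm_num) (by push_cast; linear_combination h)
  have f7 : (x+2+5/4) ≠ 0 := by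
    intro h; exact add_frac_ne (n+2) 5 4 (by norm_num) (by norm_num) (by push_cast; linear_combination h)
  have f8 : (x+2+3/2) ≠ 0 := by
    intro h; exact add_frac_ne (n+2) 3 2 (by norm_num) (by norm_num) (by push_cast; linear_combination h)
  have f9 : (x+2+1) ≠ 0 := by
    intro h; exact add_frac_ne (n+2) 1 1 (by norm_num) (by norm_num) (by push_cast; linear_combination h)
  have hQ : ((x+5/4)*(x+3/2)*(x+1)) * ((x+1+5/4)*(x+1+3/2)*(x+1+1))
      * ((x+2+5/4)*(x+2+3/2)*(x+2+1)) ≠ 0 := by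
    exact mul_ne_zero (mul_ne_zero (mul_ne_zero (mul_ne_zero f1 f2) f3)
      (mul_ne_zero (mul_ne_zero f4 f5) f6)) (mul_ne_zero (mul_ne_zero f7 f8) f9)
  have zid : sg0 x * (((x+5/4)*(x+3/2)*(x+1)) * ((x+1+5/4)*(x+1+3/2)*(x+1+1)) * ((x+2+5/4)*(x+2+3/2)*(x+2+1)))
      + sg1 x * (((x+5/12)*(x+3/4)*(x+13/12)) * ((x+1+5/4)*(x+1+3/2)*(x+1+1)) * ((x+2+5/4)*(x+2+3/2)*(x+2+1)))
      + sg2 x * (((x+5/12)*(x+3/4)*(x+13/12)) * ((x+1+5/12)*(x+1+3/4)*(x+1+13/12)) * ((x+2+5/4)*(x+2+3/2)*(x+2+1)))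
      + sg3 x * (((x+5/12)*(x+3/4)*(x+13/12)) * ((x+1+5/12)*(x+1+3/4)*(x+1+13/12)) * ((x+2+5/12)*(x+2+3/4)*(x+2+13/12))) = 0 := by
    unfold sg0 sg1 sg2 sg3
    ring
  have H : (sg0 x * Aco n + sg1 x * Aco (n+1) + sg2 x * Aco (n+2) + sg3 x * Aco (n+3))
      * (((x+5/4)*(x+3/2)*(x+1)) * ((x+1+5/4)*(x+1+3/2)*(x+1+1))
        * ((x+2+5/4)*(x+2+3/2)*(x+2+1))) = 0 := by
    linear_combination
      (Aco n) * zid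
      + (sg1 x * ((x+1+5/4)*(x+1+3/2)*(x+1+1)) * ((x+2+5/4)*(x+2+3/2)*(x+2+1))
        + sg2 x * ((x+1+5/12)*(x+1+3/4)*(x+1+13/12)) * ((x+2+5/4)*(x+2+3/2)*(x+2+1))
        + sg3 x * ((x+1+5/12)*(x+1+3/4)*(x+1+13/12)) * ((x+2+5/12)*(x+2+3/4)*(x+2+13/12))) * r0
      + (sg2 x * ((x+5/4)*(x+3/2)*(x+1)) * ((x+2+5/4)*(x+2+3/2)*(x+2+1))
        + sg3 x * ((x+2+5/12)*(x+2+3/4)*(x+2+13/12)) * ((x+5/4)*(x+3/2)*(x+1))) * r1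
      + (sg3 x * ((x+5/4)*(x+3/2)*(x+1)) * ((x+1+5/4)*(x+1+3/2)*(x+1+1))) * r2
  exact (mul_eq_zero.mp H).resolve_right hQ

/- ### `sg3` never vanishes on ℕ -/

lemma sg3_ne (n : ℕ) : sg3 (n:ℂ) ≠ 0 := by
  have h : sg3 (n:ℂ) = ((8406478080 + 16825459968*n + 13944918528*n^2 + 6127902720*n^3
      + 1506263040*n^4 + 196411392*n^5 + 10616832*n^6 : ℕ) : ℂ) := by
    unfold sg3; push_cast; ring
  rw [h]
  exact Nat.cast_ne_zero.mpr (by positivity)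

/- ### Initial values -/

lemma poch_one (x : ℂ) : poch x 1 = x := by simp [poch]

lemma poch_two (x : ℂ) : poch x 2 = x * (x+1) := by
  rw [show 2 = 1+1 from rfl, poch_succ, poch_one]; push_cast; ring

lemma Cz0 : Cz 0 = 1 := by
  have : Cz ((0:ℕ):ℤ) = Cco 0 := CzNat 0
  simpa [Cco, poch_zero] using this

lemma Cz1 : Cz 1 = 55/216 := by
  have h : Cz ((1:ℕ):ℤ) = Cco 1 := CzNat 1
  have : Cco 1 = 55/216 := by
    unfold Cco
    rw [poch_one, poch_one, poch_one, poch_one, poch_one]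
    norm_num
  simpa [this] using h

lemma Cz2 : Cz 2 = 437/3456 := by
  have h : Cz ((2:ℕ):ℤ) = Cco 2 := CzNat 2
  have : Cco 2 = 437/3456 := by
    unfold Cco
    rw [poch_two, poch_two, poch_two, poch_two, poch_two]
    norm_num
  simpa [this] using h

lemma Bco0 : Bco 0 = 1 := by simp [Bco, poch_zero]
lemma Bco1 : Bco 1 = -2/27 := by
  unfold Bco
  rw [poch_one, poch_one, poch_one, poch_one, poch_one]
  norm_num
lemma Bco2 : Bco 2 = -2/81 := by
  unfold Bco
  rw [poch_two, poch_two, poch_two, poch_two, poch_two]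
  norm_num

lemma Aco0 : Aco 0 = 1 := by simp [Aco, poch_zero]
lemma Aco1 : Aco 1 = 13/72 := by
  unfold Aco
  rw [poch_one, poch_one, poch_one, poch_one, poch_one]
  norm_num
lemma Aco2 : Aco 2 = 7735/93312 := by
  unfold Aco
  rw [poch_two, poch_two, poch_two, poch_two, poch_two]
  norm_num

lemma dd0 : dd 0 = Aco 0 := by
  unfold dd
  rw [Finset.sum_range_one]
  unfold FF
  norm_num [Bco0, Cz0, Aco0]

lemma dd1 : dd 1 = Aco 1 := by
  unfold dd
  rw [Finset.sum_range_succ, Finset.sum_range_one]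
  unfold FF
  norm_num [Bco0, Bco1, Cz0, Cz1, Aco1]

lemma dd2 : dd 2 = Aco 2 := by
  unfold dd
  rw [Finset.sum_range_succ, Finset.sum_range_succ, Finset.sum_range_one]
  unfold FF
  norm_num [Bco0, Bco1, Bco2, Cz0, Cz1, Cz2, Aco2]

/- ### Induction -/

lemma dd_eq_Aco : ∀ n, dd n = Aco n := by
  have key : ∀ m, dd m = Aco m ∧ dd (m+1) = Aco (m+1) ∧ dd (m+2) = Aco (m+2) := by
    intro m
    induction m with
    | zero => exact ⟨dd0, dd1, dd2⟩
    | succ p ih =>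
      refine ⟨ih.2.1, ih.2.2, ?_⟩
      have h1 := dd_rec p
      have h2 := aco_rec p
      rw [ih.1, ih.2.1, ih.2.2] at h1
      have h3 : sg3 (p:ℂ) * (dd (p+3) - Aco (p+3)) = 0 := by linear_combination h1 - h2
      have h4 := (mul_eq_zero.mp h3).resolve_left (sg3_ne p)
      have h5 : dd (p+3) = Aco (p+3) := by linear_combination h4
      have e1 : p+1+2 = p+3 := by omega
      rw [e1]
      exact h5
  exact fun n => (key n).1

/- ### Main theorem -/

/-- `₃F₂(5/12,3/4,13/12; 5/4,3/2; K) = ₃F₂(-1/6,1/6,1/2; 3/4,1/4; K)·₃F₂(7/12,11/12,5/4; 7/4,3/2; K)`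
as formal power series. -/
theorem hypergeometric_identity_three :
    F32 (5/12) (3/4) (13/12) (5/4) (3/2)
      = F32 (-1/6) (1/6) (1/2) (3/4) (1/4) * F32 (7/12) (11/12) (5/4) (7/4) (3/2) := by
  ext n
  rw [F32, F32, F32, PowerSeries.coeff_mk, PowerSeries.coeff_mul]
  rw [Finset.Nat.sum_antidiagonal_eq_sum_range_succ_mk]
  simp only [PowerSeries.coeff_mk]
  have lhs_eq : poch (5/12) n * poch (3/4) n * poch (13/12) n
      / (poch (5/4) n * poch (3/2) n * (n.factorial : ℂ)) = Aco n := rfl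
  rw [lhs_eq, ← dd_eq_Aco n]
  unfold dd
  apply Finset.sum_congr rfl
  intro k hk
  have hkn : k ≤ n := by
    simp only [Finset.mem_range] at hk
    omega
  unfold FF
  have e1 : ((n:ℤ) - (k:ℤ)) = ((n - k : ℕ) : ℤ) := by
    push_cast [Nat.cast_sub hkn]; ring
  rw [e1, CzNat]
  rfl
end
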